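/- The Lie algebra n₄ with nonzero brackets [e₄,e₁] = e₂, [e₄,e₂] = e₃ admits no para-complex structure K compatible with the symplectic form ω = e¹² + e³⁴: there is no linear K with K² = Id, tr K = 0, vanishing Nijenhuis tensor, and ω(Ku, Kv) = −ω(u,v). -/
import Mathlib

/-- The bracket of the Lie algebra `n₄` on `ℝ⁴` (0-indexed):
`[e₃,e₀] = e₁`, `[e₃,e₁] = e₂`. -/
def brN4 (u v : Fin 4 → ℝ) : Fin 4 → ℝ :=
  ![0, u 3 * v 0 - u 0 * v 3, u 3 * v 1 - u 1 * v 3, 0]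

/-- The symplectic form `ω = e¹² + e³⁴` (0-indexed: `e⁰¹ + e²³`). -/
def omN4 (u v : Fin 4 → ℝ) : ℝ :=
  u 0 * v 1 - u 1 * v 0 + (u 2 * v 3 - u 3 * v 2)

theorem n4_key (K : (Fin 4 → ℝ) →ₗ[ℝ] (Fin 4 → ℝ))
    (hK2 : ∀ u, K (K u) = u)
    (htr : LinearMap.trace ℝ (Fin 4 → ℝ) K = 0)
    (hN : ∀ u v, brN4 u v + brN4 (K u) (K v)
          - K (brN4 (K u) v) - K (brN4 u (K v)) = 0)
    (hω : ∀ u v, omN4 (K u) (K v) = -omN4 u v)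
    (ε : ℝ) (hε : ε = 1 ∨ ε = -1)
    (hw3 : 1 + ε * K (Pi.single 3 1) 3 ≠ 0) : False := by
  have hε2 : ε * ε = 1 := by rcases hε with h | h <;> subst h <;> norm_num
  set x : Fin 4 → (Fin 4 → ℝ) := fun i => Pi.single i 1 + ε • K (Pi.single i 1) with hxdef
  have hKx : ∀ i, K (x i) = ε • x i := by
    intro i
    simp only [hxdef, map_add, map_smul, hK2, smul_add, smul_smul, hε2, one_smul]
    abel
  have isot : ∀ u v, K u = ε • u → K v = ε • v → omN4 u v = 0 := by
    intro u v hu hv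
    have h := hω u v
    rw [hu, hv] at h
    have h2 : omN4 (ε • u) (ε • v) = ε * ε * omN4 u v := by
      simp only [omN4, Pi.smul_apply, smul_eq_mul]; ring
    rw [h2, hε2, one_mul] at h
    linarith
  have eig : ∀ u v, K u = ε • u → K v = ε • v → K (brN4 u v) = ε • brN4 u v := by
    intro u v hu hv
    have h := hN u v
    rw [hu, hv] at h
    have h1 : brN4 (ε • u) (ε • v) = brN4 u v := by
      funext j; fin_cases j <;> simp [brN4] <;>
        first
        | linear_combination (u 3 * v 0 - u 0 * v 3) * hε2
        | linear_combination (u 3 * v 1 - u 1 * v 3) * hε2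
    have h2 : brN4 (ε • u) v = ε • brN4 u v := by
      funext j; fin_cases j <;> simp [brN4] <;> ring
    have h3 : brN4 u (ε • v) = ε • brN4 u v := by
      funext j; fin_cases j <;> simp [brN4] <;> ring
    rw [h1, h2, h3, map_smul] at h
    funext j
    have hj := congrFun h j
    simp only [Pi.add_apply, Pi.sub_apply, Pi.smul_apply, smul_eq_mul, Pi.zero_apply] at hj
    simp only [Pi.smul_apply, smul_eq_mul]
    linear_combination (-(ε : ℝ)/2) * hj - (K (brN4 u v) j) * hε2
  have hexp : ∀ u : Fin 4 → ℝ, u = u 0 • (Pi.single 0 1 : Fin 4 → ℝ)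
      + u 1 • (Pi.single 1 1 : Fin 4 → ℝ) + u 2 • (Pi.single 2 1 : Fin 4 → ℝ)
      + u 3 • (Pi.single 3 1 : Fin 4 → ℝ) := by
    intro u; funext j; fin_cases j <;> simp [Pi.single_apply]
  have Hkt : (1:ℝ) = K (Pi.single 3 1) 0 * K (Pi.single 0 1) 3
      + K (Pi.single 3 1) 1 * K (Pi.single 1 1) 3
      + K (Pi.single 3 1) 2 * K (Pi.single 2 1) 3
      + K (Pi.single 3 1) 3 * K (Pi.single 3 1) 3 := by
    have e1 : K (K (Pi.single 3 1)) = K (Pi.single 3 1) 0 • K (Pi.single 0 1)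
        + K (Pi.single 3 1) 1 • K (Pi.single 1 1)
        + K (Pi.single 3 1) 2 • K (Pi.single 2 1)
        + K (Pi.single 3 1) 3 • K (Pi.single 3 1) := by
      conv_lhs => rw [hexp (K (Pi.single 3 1))]
      simp [map_add, map_smul]
    have h2 := congrFun e1 3
    rw [hK2] at h2
    simpa using h2
  have Htr : K (Pi.single 0 1) 0 + K (Pi.single 1 1) 1 + K (Pi.single 2 1) 2
      + K (Pi.single 3 1) 3 = 0 := by
    have hs : ∀ i : Fin 4, (Pi.single i 1 : Fin 4 → ℝ) = fun j => if j = i then 1 else 0 := by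
      intro i; funext j; simp [Pi.single_apply]
    rw [LinearMap.trace_eq_matrix_trace ℝ (Pi.basisFun ℝ (Fin 4)) K] at htr
    simpa [Matrix.trace, LinearMap.toMatrix, Fin.sum_univ_four, Matrix.diag, hs] using htr
  have HD0 := isot (x 3) (brN4 (x 3) (brN4 (x 3) (x 0))) (hKx 3) (eig _ _ (hKx 3) (eig _ _ (hKx 3) (hKx 0)))
  have HD1 := isot (x 3) (brN4 (x 3) (brN4 (x 3) (x 1))) (hKx 3) (eig _ _ (hKx 3) (eig _ _ (hKx 3) (hKx 1)))
  have HD2 := isot (x 3) (brN4 (x 3) (brN4 (x 3) (x 2))) (hKx 3) (eig _ _ (hKx 3) (eig _ _ (hKx 3) (hKx 2)))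
  have HC1 := isot (x 3) (brN4 (x 3) (x 1)) (hKx 3) (eig _ _ (hKx 3) (hKx 1))
  have HC2 := isot (x 3) (brN4 (x 3) (x 2)) (hKx 3) (eig _ _ (hKx 3) (hKx 2))
  have HX2 := isot (x 3) (x 2) (hKx 3) (hKx 2)
  simp [omN4, brN4, hxdef] at HD0 HD1 HD2 HC1 HC2 HX2
  have a0 := HD0.resolve_left hw3
  have a1 := HD1.resolve_left hw3
  have a2 := HD2.resolve_left hw3
  have hB1 : (1 + ε * K (Pi.single 3 1) 3) *
      ((1 + ε * K (Pi.single 3 1) 3) * (1 + ε * K (Pi.single 1 1) 1)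
        - ε * K (Pi.single 3 1) 1 * (ε * K (Pi.single 1 1) 3)) = 0 := by
    linear_combination ε * K (Pi.single 3 1) 0 * a1 - HC1
  have B1 := (mul_eq_zero.mp hB1).resolve_left hw3
  have hB2 : (1 + ε * K (Pi.single 3 1) 3) *
      ((1 + ε * K (Pi.single 3 1) 3) * (ε * K (Pi.single 2 1) 1)
        - ε * K (Pi.single 3 1) 1 * (ε * K (Pi.single 2 1) 3)) = 0 := by
    linear_combination ε * K (Pi.single 3 1) 0 * a2 - HC2
  have B2 := (mul_eq_zero.mp hB2).resolve_left hw3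
  have hf2 : (1 + ε * K (Pi.single 3 1) 3) *
      ((1 + ε * K (Pi.single 3 1) 3) * (1 + ε * K (Pi.single 2 1) 2)
        - ε * K (Pi.single 3 1) 2 * (ε * K (Pi.single 2 1) 3)) = 0 := by
    linear_combination (-(1 + ε * K (Pi.single 3 1) 3)) * HX2
      + (ε * K (Pi.single 3 1) 0) * B2 - (ε * K (Pi.single 3 1) 1) * a2
  have f2 := (mul_eq_zero.mp hf2).resolve_left hw3
  have final : (2:ℝ) * (1 + ε * K (Pi.single 3 1) 3) = 0 := by
    linear_combination a0 + B1 + f2 - ε * (1 + ε * K (Pi.single 3 1) 3) * Htr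
      - (ε * ε) * Hkt + hε2
  exact hw3 (by linarith)

/-- The Lie algebra `n₄` admits no para-complex structure compatible with
`ω = e¹² + e³⁴`: there is no linear `K` with `K² = Id`, `tr K = 0`, vanishing
Nijenhuis tensor, and `ω(Ku, Kv) = −ω(u,v)`. -/
theorem stmt18 :
    ¬ ∃ K : (Fin 4 → ℝ) →ₗ[ℝ] (Fin 4 → ℝ),
      (∀ u, K (K u) = u) ∧
      LinearMap.trace ℝ (Fin 4 → ℝ) K = 0 ∧
      (∀ u v, brN4 u v + brN4 (K u) (K v)
          - K (brN4 (K u) v) - K (brN4 u (K v)) = 0) ∧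
      (∀ u v, omN4 (K u) (K v) = -omN4 u v) := by
  rintro ⟨K, hK2, htr, hN, hω⟩
  by_cases h : 1 + K (Pi.single 3 1) 3 = 0
  · have ht3 : K (Pi.single 3 1) 3 = -1 := by linarith
    exact n4_key K hK2 htr hN hω (-1) (Or.inr rfl) (by norm_num [ht3])
  · exact n4_key K hK2 htr hN hω 1 (Or.inl rfl) (by simpa using h)
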